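/- Let j ≥ 1 and let ξ ∈ ℝ^{2n} be orthogonal to V_{j−1}. Then the vector C_t ξ is of order t^{j+1} for short times: there exist c, t₀ > 0 such that ‖C_t ξ‖ ≤ c·t^{j+1} for all 0 ≤ t ≤ t₀. -/

import Mathlib

/-!
Write `Rₜ = exp (t A)`. Since `Rₛ M Rₛᵀ R₋ₜᵀ = Rₛ M R_{s-t}ᵀ`, the vector `Cₜ ξ` is `R₋ₜ` applied
to `∫₀ᵗ Rₛ M R_{s-t}ᵀ ξ ds`, so it suffices that `u ↦ M exp (u Aᵀ) ξ` is `O(uʲ)` at `0`. Its `m`-th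
derivative at `0` is `M (Aᵀ)ᵐ ξ`, and `v ⬝ (Aᵀ)ᵐ ξ = ξ ⬝ Aᵐ v`; because `A = F + NΩ` with `NΩ`
mapping into `V₀`, `Aᵐ V₀ ⊆ Vₘ ⊆ V_{j-1}` for `m < j`, so these derivatives vanish. The order
of vanishing is then obtained by induction on `j` from the mean value inequality.
-/

open Matrix MeasureTheory intervalIntegral
open Asymptotics Filter Topology NormedSpace

section Krylov

variable {R ι : Type*} [CommRing R] [Fintype ι] [DecidableEq ι]

def krylovSpace (F : Matrix ι ι R) (V₀ : Submodule R (ι → R)) (j : ℕ) : Submodule R (ι → R) :=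
  ⨆ m ∈ Finset.range (j + 1), V₀.map (F ^ m).mulVecLin

variable {F G : Matrix ι ι R} {V₀ : Submodule R (ι → R)}

theorem map_pow_le_krylovSpace {m j : ℕ} (hm : m ≤ j) :
    V₀.map (F ^ m).mulVecLin ≤ krylovSpace F V₀ j :=
  le_biSup (fun m => V₀.map (F ^ m).mulVecLin) (Finset.mem_range_succ_iff.2 hm)

theorem krylovSpace_mono : Monotone (krylovSpace F V₀) := fun _ _ hij =>
  iSup₂_le fun _ hm => map_pow_le_krylovSpace ((Finset.mem_range_succ_iff.1 hm).trans hij)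

theorem le_krylovSpace (j : ℕ) : V₀ ≤ krylovSpace F V₀ j := by
  simpa using map_pow_le_krylovSpace (F := F) (V₀ := V₀) (Nat.zero_le j)

theorem mulVec_mem_krylovSpace_succ {j : ℕ} {x : ι → R} (hx : x ∈ krylovSpace F V₀ j) :
    F *ᵥ x ∈ krylovSpace F V₀ (j + 1) := by
  suffices krylovSpace F V₀ j ≤ (krylovSpace F V₀ (j + 1)).comap F.mulVecLin from this hx
  refine iSup₂_le fun m hm => ?_
  rw [← Submodule.map_le_iff_le_comap, ← Submodule.map_comp, ← mulVecLin_mul, ← pow_succ']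
  exact map_pow_le_krylovSpace (by simpa using hm)

theorem pow_mulVec_mem_krylovSpace_of_mulVec_mem (hG : ∀ y, G *ᵥ y ∈ V₀) {v : ι → R}
    (hv : v ∈ V₀) (m : ℕ) : (F + G) ^ m *ᵥ v ∈ krylovSpace F V₀ m := by
  induction m with
  | zero => simpa using le_krylovSpace 0 hv
  | succ m ih =>
    rw [pow_succ', ← mulVec_mulVec, add_mulVec]
    exact add_mem (mulVec_mem_krylovSpace_succ ih) (le_krylovSpace _ (hG _))

end Krylov

section RankOneSums

variable {R ι κ : Type*} [CommRing R] [Fintype ι] (s : Finset κ) (a b : κ → ι → R)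

theorem sum_vecMulVec_sub_mulVec_mem_span (y : ι → R) :
    (∑ k ∈ s, (vecMulVec (a k) (b k) - vecMulVec (b k) (a k))) *ᵥ y ∈
      Submodule.span R (Set.range a ∪ Set.range b) := by
  rw [sum_mulVec]
  refine Submodule.sum_mem _ fun k _ => ?_
  rw [sub_mulVec, vecMulVec_mulVec, vecMulVec_mulVec, op_smul_eq_smul, op_smul_eq_smul]
  exact sub_mem (Submodule.smul_mem _ _ (Submodule.subset_span (.inl ⟨k, rfl⟩)))
    (Submodule.smul_mem _ _ (Submodule.subset_span (.inr ⟨k, rfl⟩)))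

theorem sum_vecMulVec_self_add_mulVec_eq_zero {y : ι → R} (ha : ∀ k, a k ⬝ᵥ y = 0)
    (hb : ∀ k, b k ⬝ᵥ y = 0) :
    (∑ k ∈ s, (vecMulVec (a k) (a k) + vecMulVec (b k) (b k))) *ᵥ y = 0 := by
  simp [sum_mulVec, add_mulVec, vecMulVec_mulVec, ha, hb]

end RankOneSums

theorem isBigO_pow_succ_of_hasDerivAt {E : Type*} [NormedAddCommGroup E] [NormedSpace ℝ E]
    {f f' : ℝ → E} {j : ℕ} (hf : ∀ u, HasDerivAt f (f' u) u) (hf0 : f 0 = 0)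
    (hf' : f' =O[𝓝 0] fun u => u ^ j) : f =O[𝓝 0] fun u => u ^ (j + 1) := by
  obtain ⟨c, hc, hcf'⟩ := hf'.exists_pos
  obtain ⟨δ, hδ, hbound⟩ := Metric.eventually_nhds_iff.1 hcf'.bound
  refine IsBigO.of_bound c ?_
  filter_upwards [Metric.ball_mem_nhds 0 hδ] with u hu
  have hseg : ∀ y ∈ Set.uIcc 0 u, ‖f' y‖ ≤ c * |u| ^ j := fun y hy => by
    have hyu : |y| ≤ |u| := by simpa using Set.abs_sub_left_of_mem_uIcc hy
    calc ‖f' y‖ ≤ c * ‖y ^ j‖ := hbound (by simpa using hyu.trans_lt (by simpa using hu))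
      _ ≤ c * |u| ^ j := by gcongr; simpa using pow_le_pow_left₀ (abs_nonneg y) hyu j
  have := Convex.norm_image_sub_le_of_norm_hasDerivWithin_le
    (fun y _ => (hf y).hasDerivWithinAt) hseg (convex_uIcc 0 u)
    Set.left_mem_uIcc Set.right_mem_uIcc
  simpa [hf0, norm_pow, pow_succ, mul_assoc] using this

theorem isBigO_map_exp_smul_of_map_pow_eq_zero {𝔸 E : Type*} [NormedRing 𝔸] [NormedAlgebra ℝ 𝔸]
    [CompleteSpace 𝔸] [NormedAddCommGroup E] [NormedSpace ℝ E] (B : 𝔸) (j : ℕ) :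
    ∀ L : 𝔸 →L[ℝ] E, (∀ m < j, L (B ^ m) = 0) →
      (fun u : ℝ => L (exp (u • B))) =O[𝓝 0] fun u => u ^ j := by
  induction j with
  | zero =>
    intro L _
    simpa using (L.continuous.continuousAt.comp
      (hasDerivAt_exp_smul_const B (0 : ℝ)).continuousAt).isBigO_one ℝ
  | succ j ih =>
    intro L hL
    have hderiv : ∀ u : ℝ, HasDerivAt (fun u : ℝ => L (exp (u • B)))
        ((L.comp ((ContinuousLinearMap.mul ℝ 𝔸).flip B)) (exp (u • B))) u := fun u =>
      L.hasFDerivAt.comp_hasDerivAt u (hasDerivAt_exp_smul_const B u)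
    refine isBigO_pow_succ_of_hasDerivAt hderiv (by simpa using hL 0 j.succ_pos)
      (ih _ fun m hm => ?_)
    simpa [← pow_succ] using hL (m + 1) (by omega)

theorem norm_of_intervalIntegral_mulVec_le {ι : Type*} [Fintype ι] {G : ℝ → Matrix ι ι ℝ}
    (hG : Continuous G) {t C : ℝ} (ht : 0 ≤ t) (w : ι → ℝ)
    (hC : ∀ s ∈ Set.Icc 0 t, ‖G s *ᵥ w‖ ≤ C) :
    ‖(of fun i k => ∫ s in (0:ℝ)..t, G s i k) *ᵥ w‖ ≤ C * t := by
  have hC0 : 0 ≤ C := (norm_nonneg _).trans (hC 0 ⟨le_rfl, ht⟩)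
  refine (pi_norm_le_iff_of_nonneg (by positivity)).2 fun i => ?_
  have hi : ((of fun i k => ∫ s in (0:ℝ)..t, G s i k) *ᵥ w) i = ∫ s in (0:ℝ)..t, (G s *ᵥ w) i := by
    simp only [mulVec, dotProduct, of_apply, ← intervalIntegral.integral_mul_const]
    exact (intervalIntegral.integral_finsetSum fun k _ =>
      ((hG.matrix_elem i k).mul continuous_const).intervalIntegrable _ _).symm
  rw [hi]
  simpa [abs_of_nonneg ht] using norm_integral_le_of_norm_le_const fun s hs =>
    (norm_le_pi_norm _ i).trans (hC s (Set.Ioc_subset_Icc_self (Set.uIoc_of_le ht ▸ hs)))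

section MatrixExp

-- The ℓ∞ operator norm is submultiplicative and satisfies `‖A *ᵥ v‖ ≤ ‖A‖ * ‖v‖` for the sup norm.
attribute [local instance] Matrix.linftyOpNormedRing Matrix.linftyOpNormedAlgebra

variable {ι : Type*} [Fintype ι] [DecidableEq ι]

theorem isBigO_mulVec_exp_smul_mulVec {P B : Matrix ι ι ℝ} {x : ι → ℝ} {j : ℕ}
    (h : ∀ m < j, P *ᵥ (B ^ m *ᵥ x) = 0) :
    (fun u : ℝ => P *ᵥ (exp (u • B) *ᵥ x)) =O[𝓝 0] fun u => u ^ j := by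
  let L : Matrix ι ι ℝ →L[ℝ] (ι → ℝ) := LinearMap.toContinuousLinearMap
    ((Matrix.toLin' P).comp ((LinearMap.applyₗ x).comp Matrix.toLin'.toLinearMap))
  have hL : ∀ Y, L Y = P *ᵥ (Y *ᵥ x) := fun Y => by simp [L]
  exact (isBigO_map_exp_smul_of_map_pow_eq_zero B j L fun m hm => (hL _).trans (h m hm)).congr_left
    fun u => hL _

theorem continuous_exp_smul (A : Matrix ι ι ℝ) : Continuous fun s : ℝ => exp (s • A) :=
  continuous_iff_continuousAt.2 fun s => (hasDerivAt_exp_smul_const A s).continuousAt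

theorem exists_norm_exp_smul_mulVec_le (A : Matrix ι ι ℝ) (T : ℝ) :
    ∃ K > 0, ∀ s ∈ Set.Icc (-T) T, ∀ v : ι → ℝ, ‖exp (s • A) *ᵥ v‖ ≤ K * ‖v‖ := by
  obtain ⟨K, hK⟩ := isCompact_Icc.exists_bound_of_continuousOn (continuous_exp_smul A).continuousOn
  refine ⟨max K 1, by positivity, fun s hs v => ?_⟩
  calc ‖exp (s • A) *ᵥ v‖ ≤ ‖exp (s • A)‖ * ‖v‖ := linfty_opNorm_mulVec _ _
    _ ≤ max K 1 * ‖v‖ := by gcongr; exact (hK s hs).trans (le_max_left _ _)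

theorem exp_smul_mul_exp_smul_transpose_mulVec (A M : Matrix ι ι ℝ) (ξ : ι → ℝ) (s t : ℝ) :
    (exp (s • A) * M * (exp (s • A))ᵀ) *ᵥ ((exp ((-t) • A))ᵀ *ᵥ ξ) =
      exp (s • A) *ᵥ (M *ᵥ (exp ((s - t) • Aᵀ) *ᵥ ξ)) := by
  have hsplit : exp ((s - t) • Aᵀ) = (exp (s • A))ᵀ * (exp ((-t) • A))ᵀ := by
    rw [sub_eq_add_neg, add_smul,
      exp_add_of_commute _ _ (((Commute.refl _).smul_left _).smul_right _),
      ← transpose_smul, ← transpose_smul, exp_transpose, exp_transpose]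
  simp only [hsplit, mulVec_mulVec, mul_assoc]

theorem exists_norm_conj_integral_mulVec_le (A M : Matrix ι ι ℝ) (ξ : ι → ℝ) {j : ℕ}
    (hvan : ∀ m < j, M *ᵥ ((Aᵀ) ^ m *ᵥ ξ) = 0) :
    ∃ c t₀ : ℝ, 0 < c ∧ 0 < t₀ ∧ ∀ t : ℝ, 0 ≤ t → t ≤ t₀ →
      ‖(exp ((-t) • A) * (of fun i k => ∫ s in (0:ℝ)..t, (exp (s • A) * M * (exp (s • A))ᵀ) i k)
        * (exp ((-t) • A))ᵀ) *ᵥ ξ‖ ≤ c * t ^ (j + 1) := by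
  obtain ⟨c, hc, hO⟩ := (isBigO_mulVec_exp_smul_mulVec hvan).exists_pos
  obtain ⟨δ, hδ, hsmall⟩ := Metric.eventually_nhds_iff.1 hO.bound
  obtain ⟨K, hK, hR⟩ := exists_norm_exp_smul_mulVec_le A 1
  refine ⟨K * (K * c), min 1 (δ / 2), by positivity, by positivity, fun t ht0 ht => ?_⟩
  have ht1 : t ≤ 1 := ht.trans (min_le_left _ _)
  have htδ : t < δ := by linarith [min_le_right 1 (δ / 2)]
  have hintegrand : ∀ s ∈ Set.Icc 0 t,
      ‖(exp (s • A) * M * (exp (s • A))ᵀ) *ᵥ ((exp ((-t) • A))ᵀ *ᵥ ξ)‖ ≤ K * (c * t ^ j) := by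
    rintro s ⟨hs0, hst⟩
    have hdist : |s - t| ≤ t := by rw [abs_sub_comm, abs_of_nonneg (by linarith)]; linarith
    rw [exp_smul_mul_exp_smul_transpose_mulVec]
    calc _ ≤ K * ‖M *ᵥ (exp ((s - t) • Aᵀ) *ᵥ ξ)‖ := hR s ⟨by linarith, by linarith⟩ _
      _ ≤ K * (c * |s - t| ^ j) := by
        gcongr
        refine (hsmall ?_).trans (by simp)
        rw [dist_zero_right, Real.norm_eq_abs]
        exact hdist.trans_lt htδ
      _ ≤ K * (c * t ^ j) := by gcongr
  have hG : Continuous fun s : ℝ => exp (s • A) * M * (exp (s • A))ᵀ :=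
    ((continuous_exp_smul A).matrix_mul continuous_const).matrix_mul
      (continuous_exp_smul A).matrix_transpose
  calc _ = ‖exp ((-t) • A) *ᵥ ((of fun i k => ∫ s in (0:ℝ)..t,
        (exp (s • A) * M * (exp (s • A))ᵀ) i k) *ᵥ ((exp ((-t) • A))ᵀ *ᵥ ξ))‖ := by
        simp only [mulVec_mulVec, mul_assoc]
    _ ≤ K * (K * (c * t ^ j) * t) := by
        refine (hR _ ⟨by linarith, by linarith⟩ _).trans ?_
        gcongr
        exact norm_of_intervalIntegral_mulVec_le hG ht0 _ hintegrand
    _ = K * (K * c) * t ^ (j + 1) := by ring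

end MatrixExp

theorem Ct_vector_short_time_order_general (n K : ℕ)
    (Ω : Matrix (Fin n ⊕ Fin n) (Fin n ⊕ Fin n) ℝ)
    (F : Matrix (Fin n ⊕ Fin n) (Fin n ⊕ Fin n) ℝ)
    (l : Fin K → (Fin n ⊕ Fin n) → ℂ)
    (M : Matrix (Fin n ⊕ Fin n) (Fin n ⊕ Fin n) ℝ)
    (hM : M = ∑ k, (vecMulVec (fun i => (l k i).re) (fun i => (l k i).re)
                  + vecMulVec (fun i => (l k i).im) (fun i => (l k i).im)))
    (N : Matrix (Fin n ⊕ Fin n) (Fin n ⊕ Fin n) ℝ)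
    (hN : N = ∑ k, (vecMulVec (fun i => (l k i).re) (fun i => (l k i).im)
                  - vecMulVec (fun i => (l k i).im) (fun i => (l k i).re)))
    (A : Matrix (Fin n ⊕ Fin n) (Fin n ⊕ Fin n) ℝ) (hA : A = F + N * Ω)
    (V₀ : Submodule ℝ ((Fin n ⊕ Fin n) → ℝ))
    (hV₀ : V₀ = Submodule.span ℝ
      (Set.range (fun k => fun i => (l k i).re) ∪ Set.range (fun k => fun i => (l k i).im)))
    (V : ℕ → Submodule ℝ ((Fin n ⊕ Fin n) → ℝ))
    (hV : ∀ j : ℕ, V j = ⨆ m ∈ Finset.range (j + 1), Submodule.map (F ^ m).mulVecLin V₀)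
    (R : ℝ → Matrix (Fin n ⊕ Fin n) (Fin n ⊕ Fin n) ℝ)
    (hR : ∀ t, R t = NormedSpace.exp (t • A))
    (D : ℝ → Matrix (Fin n ⊕ Fin n) (Fin n ⊕ Fin n) ℝ)
    (hD : ∀ t, D t = Matrix.of fun i j => ∫ s in (0:ℝ)..t, (R s * M * (R s)ᵀ) i j)
    (C : ℝ → Matrix (Fin n ⊕ Fin n) (Fin n ⊕ Fin n) ℝ)
    (hC : ∀ t, C t = R (-t) * D t * (R (-t))ᵀ)
    (j : ℕ)
    (ξ : (Fin n ⊕ Fin n) → ℝ) (hξ : ∀ v ∈ V (j - 1), ξ ⬝ᵥ v = 0) :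
    ∃ c t₀ : ℝ, 0 < c ∧ 0 < t₀ ∧ ∀ t : ℝ, 0 ≤ t → t ≤ t₀ →
      ‖(C t).mulVec ξ‖ ≤ c * t ^ (j + 1) := by
  obtain rfl : V = krylovSpace F V₀ := funext hV
  have hNΩ : ∀ y, (N * Ω) *ᵥ y ∈ V₀ := fun y => by
    rw [← mulVec_mulVec, hN, hV₀]
    exact sum_vecMulVec_sub_mulVec_mem_span _ _ _ _
  have horth : ∀ m < j, ∀ v ∈ V₀, v ⬝ᵥ ((Aᵀ) ^ m *ᵥ ξ) = 0 := fun m hm v hv => by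
    rw [← transpose_pow, mulVec_transpose, dotProduct_comm, ← dotProduct_mulVec, hA]
    exact hξ _ (krylovSpace_mono (show m ≤ j - 1 by omega)
      (pow_mulVec_mem_krylovSpace_of_mulVec_mem hNΩ hv m))
  have hvan : ∀ m < j, M *ᵥ ((Aᵀ) ^ m *ᵥ ξ) = 0 := fun m hm => by
    rw [hM]
    refine sum_vecMulVec_self_add_mulVec_eq_zero _ _ _ (fun k => horth m hm _ ?_)
      (fun k => horth m hm _ ?_) <;> rw [hV₀] <;> exact Submodule.subset_span (by simp)
  obtain ⟨c, t₀, hc, ht₀, hbound⟩ := exists_norm_conj_integral_mulVec_le A M ξ hvan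
  refine ⟨c, t₀, hc, ht₀, fun t ht0 ht => ?_⟩
  simpa only [hC, hD, hR] using hbound t ht0 ht

/-- if `ξ ⊥ V_{j-1}` (j ≥ 1), the vector `C_t ξ` is of order `t^{j+1}`
for short times: there are `c, t₀ > 0` with `‖C_t ξ‖ ≤ c t^{j+1}` for `0 ≤ t ≤ t₀`. -/
theorem Ct_vector_short_time_order (n K : ℕ) (hn : 1 ≤ n)
    (Ω : Matrix (Fin n ⊕ Fin n) (Fin n ⊕ Fin n) ℝ)
    (hΩ : Ω = Matrix.fromBlocks 0 (-1) 1 0)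
    (Q : Matrix (Fin n ⊕ Fin n) (Fin n ⊕ Fin n) ℝ) (hQ : Q.IsSymm)
    (F : Matrix (Fin n ⊕ Fin n) (Fin n ⊕ Fin n) ℝ) (hF : F = Ω * Q)
    (l : Fin K → (Fin n ⊕ Fin n) → ℂ)
    (M : Matrix (Fin n ⊕ Fin n) (Fin n ⊕ Fin n) ℝ)
    (hM : M = ∑ k, (vecMulVec (fun i => (l k i).re) (fun i => (l k i).re)
                  + vecMulVec (fun i => (l k i).im) (fun i => (l k i).im)))
    (N : Matrix (Fin n ⊕ Fin n) (Fin n ⊕ Fin n) ℝ)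
    (hN : N = ∑ k, (vecMulVec (fun i => (l k i).re) (fun i => (l k i).im)
                  - vecMulVec (fun i => (l k i).im) (fun i => (l k i).re)))
    (A : Matrix (Fin n ⊕ Fin n) (Fin n ⊕ Fin n) ℝ) (hA : A = F + N * Ω)
    (V₀ : Submodule ℝ ((Fin n ⊕ Fin n) → ℝ))
    (hV₀ : V₀ = Submodule.span ℝ
      (Set.range (fun k => fun i => (l k i).re) ∪ Set.range (fun k => fun i => (l k i).im)))
    (V : ℕ → Submodule ℝ ((Fin n ⊕ Fin n) → ℝ))
    (hV : ∀ j : ℕ, V j = ⨆ m ∈ Finset.range (j + 1), Submodule.map (F ^ m).mulVecLin V₀)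
    (R : ℝ → Matrix (Fin n ⊕ Fin n) (Fin n ⊕ Fin n) ℝ)
    (hR : ∀ t, R t = NormedSpace.exp (t • A))
    (D : ℝ → Matrix (Fin n ⊕ Fin n) (Fin n ⊕ Fin n) ℝ)
    (hD : ∀ t, D t = Matrix.of fun i j => ∫ s in (0:ℝ)..t, (R s * M * (R s)ᵀ) i j)
    (C : ℝ → Matrix (Fin n ⊕ Fin n) (Fin n ⊕ Fin n) ℝ)
    (hC : ∀ t, C t = R (-t) * D t * (R (-t))ᵀ)
    (j : ℕ) (hj : 1 ≤ j)
    (ξ : (Fin n ⊕ Fin n) → ℝ) (hξ : ∀ v ∈ V (j - 1), ξ ⬝ᵥ v = 0) :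
    ∃ c t₀ : ℝ, 0 < c ∧ 0 < t₀ ∧ ∀ t : ℝ, 0 ≤ t → t ≤ t₀ →
      ‖(C t).mulVec ξ‖ ≤ c * t ^ (j + 1) :=
  Ct_vector_short_time_order_general n K Ω F l M hM N hN A hA V₀ hV₀ V hV R hR D hD C hC j ξ hξ
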